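/- Let A, B be finite-dimensional C*-algebras, K ⊆ S(A) a convex subset, and Φ : A → B a completely positive map with Choi matrix X_Φ ∈ B ⊗ A. Then Tr Φ(a) = 1 for all a ∈ K (i.e. Φ defines a channel on K) if and only if Tr_B X_Φ ∈ I_A + (K^T)^⊥. -/

import Mathlib

open scoped BigOperators Pointwise

namespace GenCh

/-- A finite-dimensional C*-algebra `⊕ⱼ B(Hⱼ)`, represented as the algebra of
block-diagonal operators: an element assigns to each block index `i` a matrix
acting on the (finite-dimensional) Hilbert space with orthonormal basis `d i`. -/
abbrev PiMat (ι : Type) (d : ι → Type) : Type := ∀ i, Matrix (d i) (d i) ℂ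

variable {ι : Type} [Fintype ι] [DecidableEq ι] {d : ι → Type}
  [∀ i, Fintype (d i)] [∀ i, DecidableEq (d i)]
variable {κ : Type} [Fintype κ] [DecidableEq κ] {e : κ → Type}
  [∀ j, Fintype (e j)] [∀ j, DecidableEq (e j)]

/-- A positive element of a (finite-dimensional) C*-algebra: `a = b* b`. -/
def IsPosEl {A : Type} [NonUnitalSemiring A] [StarRing A] (a : A) : Prop :=
  ∃ b, a = star b * b

/-- The (un-normalized) trace `Tr` on `⊕ⱼ B(Hⱼ)`. -/
noncomputable def trL : PiMat ι d →ₗ[ℂ] ℂ where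
  toFun a := ∑ i, (a i).trace
  map_add' a b := by simp [Matrix.trace_add, Finset.sum_add_distrib]
  map_smul' c a := by simp [Matrix.trace_smul, Finset.mul_sum, smul_eq_mul]

/-- Complete positivity of a linear map between (finite-dimensional) C*-algebras:
for every `n`, the induced map on `n × n` matrices (i.e. `id_{B(ℂⁿ)} ⊗ Φ`)
preserves positivity. -/
def IsCP {A B : Type} [NonUnitalSemiring A] [StarRing A] [Module ℂ A]
    [NonUnitalSemiring B] [StarRing B] [Module ℂ B] (Φ : A →ₗ[ℂ] B) : Prop :=
  ∀ (n : ℕ) (M : Matrix (Fin n) (Fin n) A), IsPosEl M → IsPosEl (M.map Φ)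

/-- Complete positivity of a linear map defined on a linear subspace `J ⊆ A`:
for every `n`, the entrywise application (i.e. `id_{B(ℂⁿ)} ⊗ Ξ`) maps matrices with
entries in `J` that are positive in `Mₙ(A)` to positive elements of `Mₙ(B)`. -/
def IsCPOn {A B : Type} [NonUnitalSemiring A] [StarRing A] [Module ℂ A]
    [NonUnitalSemiring B] [StarRing B] [Module ℂ B]
    (J : Submodule ℂ A) (Ξ : J →ₗ[ℂ] B) : Prop :=
  ∀ (n : ℕ) (M : Matrix (Fin n) (Fin n) J),
    IsPosEl (M.map (fun x => (x : A))) → IsPosEl (M.map (fun x => Ξ x))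

/-- The state space `S(A)`: positive elements of trace one. -/
def stateSet (ι : Type) [Fintype ι] [DecidableEq ι] (d : ι → Type)
    [∀ i, Fintype (d i)] [∀ i, DecidableEq (d i)] : Set (PiMat ι d) :=
  {a | IsPosEl a ∧ trL a = 1}

/-- `K` is a section of the state space: `K = [K] ∩ S(A)`. -/
def IsSection (K : Set (PiMat ι d)) : Prop :=
  K = (Submodule.span ℂ K : Set (PiMat ι d)) ∩ stateSet ι d

/-- The transpose `a ↦ aᵀ` (blockwise). -/
def pT (a : PiMat ι d) : PiMat ι d := fun i => (a i).transpose

/-- The transpose as a linear map. -/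
noncomputable def pTL : PiMat ι d →ₗ[ℂ] PiMat ι d where
  toFun := pT
  map_add' a b := by funext i; simp [pT]
  map_smul' c a := by funext i; simp [pT]

/-- The Hilbert–Schmidt inner product `⟨a,b⟩ = Tr(a* b)`. -/
noncomputable def hsIP (a b : PiMat ι d) : ℂ := trL (star a * b)

/-- The orthogonal complement `S^⊥` of a subset w.r.t. the Hilbert-Schmidt
inner product, as a (complex-linear) subspace. -/
noncomputable def orthSet (S : Set (PiMat ι d)) : Submodule ℂ (PiMat ι d) where
  carrier := {x | ∀ a ∈ S, trL (star a * x) = 0}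
  zero_mem' := by intro a _; simp
  add_mem' := by
    intro x y hx hy a ha
    rw [mul_add, map_add, hx a ha, hy a ha, add_zero]
  smul_mem' := by
    intro c x hx a ha
    rw [mul_smul_comm, map_smul, hx a ha, smul_zero]

/-- The embedding of `a ⊗ b` into the tensor product algebra
`(⊕ᵢ B(Hᵢ)) ⊗ (⊕ⱼ B(Kⱼ)) = ⊕_{i,j} B(Hᵢ ⊗ Kⱼ)`, realized via Kronecker products. -/
noncomputable def otimes (a : PiMat ι d) (b : PiMat κ e) :
    PiMat (ι × κ) (fun p => d p.1 × e p.2) :=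
  fun p => Matrix.kroneckerMap (· * ·) (a p.1) (b p.2)

/-- The tensor product `V ⊗ W` of two subsets as a subspace of the tensor
product algebra: the span of elementary tensors. -/
noncomputable def tensSub (V : Set (PiMat κ e)) (W : Set (PiMat ι d)) :
    Submodule ℂ (PiMat (κ × ι) (fun p => e p.1 × d p.2)) :=
  Submodule.span ℂ {x | ∃ b ∈ V, ∃ w ∈ W, x = otimes b w}

/-- The Choi matrix `X_Φ ∈ B ⊗ A` of a linear map `Φ : A → B`,
defined blockwise via `X_{Φ_ij} = (Φ_ij ⊗ id)(Ψ_{H_i})`. -/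
noncomputable def choi (Φ : PiMat ι d →ₗ[ℂ] PiMat κ e) :
    PiMat (κ × ι) (fun p => e p.1 × d p.2) :=
  fun p x y => Φ (Pi.single p.2 (Matrix.single x.2 y.2 1)) p.1 x.1 y.1

/-- The partial trace `Tr_B : B ⊗ A → A` over the first (output) factor. -/
noncomputable def ptrFst (X : PiMat (κ × ι) (fun p => e p.1 × d p.2)) : PiMat ι d :=
  fun i a b => ∑ j : κ, ∑ k : e j, X (j, i) (k, a) (k, b)

/-- The map `A → B` associated to a matrix `X ∈ B ⊗ A` via
`T_X(a) = Tr_A[(I_B ⊗ aᵀ) X]`. -/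
noncomputable def applyChoi (X : PiMat (κ × ι) (fun p => e p.1 × d p.2)) (a : PiMat ι d) :
    PiMat κ e :=
  fun j u v => ∑ i : ι, ∑ m : d i, ∑ x : d i, (a i) m x * X (j, i) (u, m) (v, x)

/-- A channel: a completely positive trace-preserving linear map. -/
def IsChannel (Φ : PiMat ι d →ₗ[ℂ] PiMat κ e) : Prop :=
  IsCP Φ ∧ ∀ a, trL (Φ a) = trL a

/-- For a self-adjoint subspace `J`, the subspace `J̃ = [I_A] ∨ (Jᵀ)^⊥` spanned by
`I_A + (Jᵀ)^⊥`. -/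
noncomputable def tilde (J : Submodule ℂ (PiMat ι d)) : Submodule ℂ (PiMat ι d) :=
  Submodule.span ℂ {(1 : PiMat ι d)} ⊔ orthSet (pT '' (J : Set (PiMat ι d)))

end GenCh

namespace GenCh

/-! `a ↦ Tr Φ(a)` is the linear functional `a ↦ Tr[aᵀ Tr_B X_Φ]`. For a state `a`, which is
self-adjoint of trace one, this identifies `⟨aᵀ, Tr_B X_Φ - I_A⟩` with `Tr Φ(a) - 1`, so the
orthogonality condition on `Kᵀ` says exactly that `Tr Φ = 1` on `K`. -/

lemma IsPosEl.isSelfAdjoint {A : Type} [NonUnitalSemiring A] [StarRing A] {a : A}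
    (h : IsPosEl a) : IsSelfAdjoint a := by
  obtain ⟨b, rfl⟩ := h
  exact IsSelfAdjoint.star_mul_self b

lemma star_pT {ι : Type} {d : ι → Type} (a : PiMat ι d) : star (pT a) = pT (star a) := by
  funext i
  ext m x
  rfl

section

variable {ι : Type} [Fintype ι] [DecidableEq ι] {d : ι → Type}
  [∀ i, Fintype (d i)] [∀ i, DecidableEq (d i)]
  {κ : Type} [Fintype κ] {e : κ → Type} [∀ j, Fintype (e j)]

omit [DecidableEq ι] [∀ i, DecidableEq (d i)] in
lemma trL_pT (a : PiMat ι d) : trL (pT a) = trL a := by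
  simp only [trL, pT, LinearMap.coe_mk, AddHom.coe_mk, Matrix.trace_transpose]

lemma eq_sum_single (a : PiMat ι d) :
    a = ∑ i, ∑ m : d i, ∑ x : d i, a i m x • Pi.single i (Matrix.single m x 1) := by
  conv_lhs => rw [← Finset.univ_sum_single a]
  refine Finset.sum_congr rfl fun i _ => ?_
  conv_lhs => rw [Matrix.matrix_eq_sum_single (a i)]
  simp only [← LinearMap.single_apply ℂ, ← map_smul, map_sum, Matrix.smul_single, smul_eq_mul,
    mul_one]

lemma trL_map_eq_trL_pT_mul_ptrFst_choi (Φ : PiMat ι d →ₗ[ℂ] PiMat κ e) (a : PiMat ι d) :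
    trL (Φ a) = trL (pT a * ptrFst (choi Φ)) := by
  conv_lhs => rw [eq_sum_single a]
  simp only [map_sum, map_smul, smul_eq_mul, trL, LinearMap.coe_mk,
    AddHom.coe_mk, Pi.mul_apply, pT, Matrix.trace, Matrix.diag, Matrix.mul_apply,
    Matrix.transpose_apply]
  exact Finset.sum_congr rfl fun i _ => Finset.sum_comm

lemma hsIP_pT_ptrFst_choi_sub_one (Φ : PiMat ι d →ₗ[ℂ] PiMat κ e) {a : PiMat ι d}
    (ha : a ∈ stateSet ι d) : hsIP (pT a) (ptrFst (choi Φ) - 1) = trL (Φ a) - 1 := by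
  obtain ⟨hpos, htr⟩ := ha
  calc hsIP (pT a) (ptrFst (choi Φ) - 1) = trL (pT a * ptrFst (choi Φ)) - trL (pT a) := by
        rw [hsIP, star_pT, hpos.isSelfAdjoint.star_eq, mul_sub, mul_one, map_sub]
    _ = trL (Φ a) - 1 := by rw [← trL_map_eq_trL_pT_mul_ptrFst_choi, trL_pT, htr]

end

theorem generalized_channel_iff_choi_general
    {ι : Type} [Fintype ι] [DecidableEq ι] {d : ι → Type}
    [∀ i, Fintype (d i)] [∀ i, DecidableEq (d i)]
    {κ : Type} [Fintype κ] {e : κ → Type}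
    [∀ j, Fintype (e j)]
    (K : Set (PiMat ι d)) (hK : K ⊆ stateSet ι d)
    (Φ : PiMat ι d →ₗ[ℂ] PiMat κ e) :
    (∀ a ∈ K, trL (Φ a) = 1) ↔
      ptrFst (choi Φ) - 1 ∈ orthSet (pT '' K) := by
  change _ ↔ ∀ b ∈ pT '' K, hsIP b (ptrFst (choi Φ) - 1) = 0
  rw [Set.forall_mem_image]
  refine forall₂_congr fun a ha => ?_
  rw [hsIP_pT_ptrFst_choi_sub_one Φ (hK ha), sub_eq_zero]

/-- A completely positive map `Φ : A → B` defines a channel on a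
convex `K ⊆ S(A)` (i.e. `Tr Φ(a) = 1` for all `a ∈ K`) if and only if its Choi
matrix satisfies `Tr_B X_Φ ∈ I_A + (Kᵀ)^⊥`. -/
theorem generalized_channel_iff_choi
    {ι : Type} [Fintype ι] [DecidableEq ι] {d : ι → Type}
    [∀ i, Fintype (d i)] [∀ i, DecidableEq (d i)]
    {κ : Type} [Fintype κ] [DecidableEq κ] {e : κ → Type}
    [∀ j, Fintype (e j)] [∀ j, DecidableEq (e j)]
    (K : Set (PiMat ι d)) (hK : K ⊆ stateSet ι d) (hconv : Convex ℝ K)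
    (Φ : PiMat ι d →ₗ[ℂ] PiMat κ e) (hΦ : IsCP Φ) :
    (∀ a ∈ K, trL (Φ a) = 1) ↔
      ptrFst (choi Φ) - 1 ∈ orthSet (pT '' K) :=
  generalized_channel_iff_choi_general K hK Φ

end GenCh
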